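/- Let F_q be a finite field and let V be an n-dimensional vector space over F_q with n ≥ 3. Let σ be a graph automorphism of In(V) which maps some 1-dimensional subspace of V to a 1-dimensional subspace. Let W be a k-dimensional nontrivial proper subspace of V with basis α₁, …, α_k, and suppose σ([αᵢ]) = [βᵢ] for 1 ≤ i ≤ k, where [γ] denotes the 1-dimensional subspace spanned by γ. If β₁, …, β_k are linearly independent, then σ(W) is the subspace spanned by β₁, …, β_k. -/

import Mathlib

/-- The vertex type of the subspace inclusion graph: nontrivial proper subspaces. -/
abbrev InVert (F V : Type*) [Field F] [AddCommGroup V] [Module F V] :=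
  {W : Submodule F V // W ≠ ⊥ ∧ W ≠ ⊤}

/-- The subspace inclusion graph `In(V)`: vertices are the nontrivial proper subspaces
of `V`, two of them being adjacent iff one is properly contained in the other. -/
def inclGraph (F V : Type*) [Field F] [AddCommGroup V] [Module F V] :
    SimpleGraph (InVert F V) where
  Adj W₁ W₂ := W₁.1 < W₂.1 ∨ W₂.1 < W₁.1
  symm := ⟨fun _ _ h => h.symm⟩
  loopless := ⟨fun _ h => h.elim (lt_irrefl _) (lt_irrefl _)⟩

/-!
A graph automorphism `σ` preserves the property "no edge inside the neighbourhood of `X`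
dominates that neighbourhood". In `In(V)` this property singles out the lines and the
hyperplanes: a middle-dimensional `X` has a neighbour below and a neighbour above, and
these form a dominating edge. Vertices of equal dimension are never adjacent and, as
`dim V ≥ 3`, two lines lie in a common hyperplane that is not a line, so once `σ` maps one line
to a line it maps every line to a line.
A line lies below `X` iff it equals or is adjacent to `X`, and a subspace is the join of the
lines below it; hence `σ` is an order automorphism of the proper subspaces, it commutes with
joins, and `σ W = σ (⨆ [αᵢ]) = ⨆ [βᵢ]`.
-/

namespace SimpleGraph

variable {α β : Type*} {G : SimpleGraph α} {H : SimpleGraph β}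

def NoDominatingEdgeInNeighborSet (G : SimpleGraph α) (x : α) : Prop :=
  ∀ ⦃a b⦄, G.Adj x a → G.Adj x b → G.Adj a b →
    ∃ c, G.Adj x c ∧ ¬ G.Adj a c ∧ ¬ G.Adj b c

theorem NoDominatingEdgeInNeighborSet.map (e : G ≃g H) {x : α}
    (h : G.NoDominatingEdgeInNeighborSet x) : H.NoDominatingEdgeInNeighborSet (e x) := by
  intro a b
  obtain ⟨a, rfl⟩ := e.surjective a
  obtain ⟨b, rfl⟩ := e.surjective b
  simp only [e.map_adj_iff]
  intro ha hb hab
  obtain ⟨c, hc, hac, hbc⟩ := h ha hb hab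
  exact ⟨e c, by simpa only [e.map_adj_iff] using ⟨hc, hac, hbc⟩⟩

end SimpleGraph

open Module Submodule

theorem Submodule.lt_sup_span_singleton {R M : Type*} [Semiring R] [AddCommMonoid M]
    [Module R M] {p : Submodule R M} {v : M} (hv : v ∉ p) : p < p ⊔ R ∙ v :=
  left_lt_sup.2 (by rwa [span_singleton_le_iff_mem])

section FiniteDimensional

variable {F V : Type*} [Field F] [AddCommGroup V] [Module F V] [FiniteDimensional F V]

theorem Submodule.finrank_add_one_of_isCoatom {H : Submodule F V} (hH : IsCoatom H) :
    finrank F H + 1 = finrank F V := by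
  obtain ⟨v, -, hv⟩ := SetLike.exists_of_lt (lt_top_iff_ne_top.2 hH.1)
  rw [← finrank_sup_span_singleton hv, hH.2 _ (lt_sup_span_singleton hv), finrank_top]

def InVert.ofFinrank (p : Submodule F V) (h0 : 0 < finrank F p)
    (h1 : finrank F p < finrank F V) : InVert F V :=
  ⟨p, one_le_finrank_iff.1 h0, fun e => by rw [e, finrank_top] at h1; exact lt_irrefl _ h1⟩

@[simp]
theorem InVert.coe_ofFinrank (p : Submodule F V) (h0 : 0 < finrank F p)
    (h1 : finrank F p < finrank F V) : (InVert.ofFinrank p h0 h1).1 = p :=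
  rfl

theorem InVert.finrank_pos (X : InVert F V) : 0 < finrank F X.1 :=
  one_le_finrank_iff.2 X.2.1

theorem InVert.finrank_lt (X : InVert F V) : finrank F X.1 < finrank F V :=
  Submodule.finrank_lt X.2.2

end FiniteDimensional

namespace inclGraph

variable {F V : Type*} [Field F] [AddCommGroup V] [Module F V]

theorem not_noDominatingEdgeInNeighborSet_of_lt_of_lt {a X b : InVert F V}
    (ha : a.1 < X.1) (hb : X.1 < b.1) : ¬ (inclGraph F V).NoDominatingEdgeInNeighborSet X := by
  intro h
  obtain ⟨c, hc, hac, hbc⟩ := h (Or.inr ha) (Or.inl hb) (Or.inl (ha.trans hb))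
  rcases hc with hc | hc
  · exact hac (Or.inl (ha.trans hc))
  · exact hbc (Or.inr (hc.trans hb))

theorem map_iSup {ι : Type*} (σ : inclGraph F V ≃g inclGraph F V)
    (hle : ∀ X Y : InVert F V, (σ X).1 ≤ (σ Y).1 ↔ X.1 ≤ Y.1)
    (s : ι → InVert F V) (W : InVert F V) (hW : ⨆ i, (s i).1 = W.1) :
    (σ W).1 = ⨆ i, (σ (s i)).1 := by
  have hsW : ∀ i, (σ (s i)).1 ≤ (σ W).1 := fun i =>
    (hle _ _).2 (hW ▸ le_iSup (fun i => (s i).1) i)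
  refine le_antisymm ?_ (iSup_le hsW)
  obtain ⟨i⟩ : Nonempty ι := not_isEmpty_iff.1 fun _ => W.2.1 (hW ▸ iSup_of_empty _)
  let Y : InVert F V := ⟨⨆ i, (σ (s i)).1,
    ne_bot_of_le_ne_bot (σ (s i)).2.1 (le_iSup (fun i => (σ (s i)).1) i),
    ne_top_of_le_ne_top (σ W).2.2 (iSup_le hsW)⟩
  have hWY : W.1 ≤ (σ.symm Y).1 := hW ▸ iSup_le fun i => (hle _ _).1 <| by
    rw [σ.apply_symm_apply]
    exact le_iSup (fun i => (σ (s i)).1) i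
  simpa [Y] using (hle W (σ.symm Y)).2 hWY

variable [FiniteDimensional F V]

theorem not_adj_of_finrank_eq {X Y : InVert F V} (h : finrank F X.1 = finrank F Y.1) :
    ¬ (inclGraph F V).Adj X Y := by
  rintro (hlt | hlt) <;> have := finrank_lt_finrank_of_lt hlt <;> omega

theorem not_adj_of_not_le_of_finrank_le {X Y : InVert F V} (h : ¬ Y.1 ≤ X.1)
    (hd : finrank F Y.1 ≤ finrank F X.1) : ¬ (inclGraph F V).Adj X Y := by
  rintro (hlt | hlt)
  · exact (finrank_lt_finrank_of_lt hlt).not_ge hd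
  · exact h hlt.le

theorem lt_of_adj_of_finrank_eq_one {ℓ X : InVert F V} (hℓ : finrank F ℓ.1 = 1)
    (h : (inclGraph F V).Adj ℓ X) : ℓ.1 < X.1 := by
  refine h.resolve_right fun hlt => ?_
  have := finrank_lt_finrank_of_lt hlt
  have := InVert.finrank_pos X
  omega

theorem lt_of_adj_of_finrank_add_one_eq {H X : InVert F V}
    (hH : finrank F H.1 + 1 = finrank F V) (h : (inclGraph F V).Adj H X) : X.1 < H.1 := by
  refine h.resolve_left fun hlt => ?_
  have := finrank_lt_finrank_of_lt hlt
  have := InVert.finrank_lt X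
  omega

theorem noDominatingEdgeInNeighborSet_of_forall_lt {X : InVert F V}
    (h : ∀ a b : InVert F V, (inclGraph F V).Adj X a → (inclGraph F V).Adj X b → a.1 < b.1 →
      ∃ c : InVert F V, (inclGraph F V).Adj X c ∧ ¬ c.1 ≤ b.1 ∧
        finrank F c.1 ≤ finrank F a.1) :
    (inclGraph F V).NoDominatingEdgeInNeighborSet X := by
  intro a b ha hb hab
  wlog hlt : a.1 < b.1 generalizing a b
  · obtain ⟨c, hc, hbc, hac⟩ := this hb ha hab.symm (hab.resolve_left hlt)
    exact ⟨c, hc, hac, hbc⟩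
  obtain ⟨c, hc, hcb, hca⟩ := h a b ha hb hlt
  exact ⟨c, hc, not_adj_of_not_le_of_finrank_le (fun hca' => hcb (hca'.trans hlt.le)) hca,
    not_adj_of_not_le_of_finrank_le hcb (hca.trans (finrank_lt_finrank_of_lt hlt).le)⟩

theorem noDominatingEdgeInNeighborSet_of_finrank_eq_one {ℓ : InVert F V}
    (hℓ : finrank F ℓ.1 = 1) : (inclGraph F V).NoDominatingEdgeInNeighborSet ℓ := by
  refine noDominatingEdgeInNeighborSet_of_forall_lt fun a b ha hb hab => ?_
  have hℓa := lt_of_adj_of_finrank_eq_one hℓ ha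
  obtain ⟨v, -, hvb⟩ := SetLike.exists_of_lt (lt_top_iff_ne_top.2 b.2.2)
  have hvℓ : v ∉ ℓ.1 := fun hvℓ => hvb ((hℓa.trans hab).le hvℓ)
  have hc : finrank F ↥(ℓ.1 ⊔ F ∙ v) = 2 := by rw [finrank_sup_span_singleton hvℓ, hℓ]
  have := finrank_lt_finrank_of_lt hℓa
  have := finrank_lt_finrank_of_lt hab
  have := InVert.finrank_lt b
  refine ⟨InVert.ofFinrank (ℓ.1 ⊔ F ∙ v) (by omega) (by omega),
    Or.inl (lt_sup_span_singleton hvℓ),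
    fun hcb => hvb (hcb (mem_sup_right (mem_span_singleton_self v))),
    by rw [InVert.coe_ofFinrank]; omega⟩

theorem noDominatingEdgeInNeighborSet_of_finrank_add_one_eq {H : InVert F V}
    (hH : finrank F H.1 + 1 = finrank F V) : (inclGraph F V).NoDominatingEdgeInNeighborSet H := by
  refine noDominatingEdgeInNeighborSet_of_forall_lt fun a b ha hb hab => ?_
  obtain ⟨w, hwH, hwb⟩ := SetLike.exists_of_lt (lt_of_adj_of_finrank_add_one_eq hH hb)
  have hw : finrank F (F ∙ w) = 1 :=
    finrank_span_singleton fun hw => hwb (by rw [hw]; exact zero_mem _)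
  have := InVert.finrank_pos a
  have := finrank_lt_finrank_of_lt hab
  have := finrank_lt_finrank_of_lt (lt_of_adj_of_finrank_add_one_eq hH hb)
  refine ⟨InVert.ofFinrank (F ∙ w) (by omega) (by omega), Or.inr (show F ∙ w < H.1 from ?_),
    fun hcb => hwb (hcb (mem_span_singleton_self w)), by rw [InVert.coe_ofFinrank]; omega⟩
  have hwH' : F ∙ w ≤ H.1 := (span_singleton_le_iff_mem w _).2 hwH
  exact lt_of_le_of_finrank_lt_finrank hwH' (by omega)

theorem finrank_eq_one_or_add_one_eq {X : InVert F V}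
    (h : (inclGraph F V).NoDominatingEdgeInNeighborSet X) :
    finrank F X.1 = 1 ∨ finrank F X.1 + 1 = finrank F V := by
  by_contra! hX
  obtain ⟨x, hxX, hx⟩ := exists_mem_ne_zero_of_ne_bot X.2.1
  obtain ⟨v, -, hvX⟩ := SetLike.exists_of_lt (lt_top_iff_ne_top.2 X.2.2)
  have hx1 : finrank F (F ∙ x) = 1 := finrank_span_singleton hx
  have hXv : finrank F ↥(X.1 ⊔ F ∙ v) = finrank F X.1 + 1 := finrank_sup_span_singleton hvX
  have := InVert.finrank_pos X
  have := InVert.finrank_lt X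
  have hxX' : F ∙ x < X.1 :=
    lt_of_le_of_finrank_lt_finrank ((span_singleton_le_iff_mem x _).2 hxX) (by omega)
  exact not_noDominatingEdgeInNeighborSet_of_lt_of_lt
    (a := InVert.ofFinrank (F ∙ x) (by omega) (by omega))
    (b := InVert.ofFinrank (X.1 ⊔ F ∙ v) (by omega) (by omega))
    hxX' (lt_sup_span_singleton hvX) h

theorem finrank_map_eq_one (hn : 3 ≤ finrank F V) (σ : inclGraph F V ≃g inclGraph F V)
    {L : InVert F V} (hL : finrank F L.1 = 1) (hσL : finrank F (σ L).1 = 1)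
    {ℓ : InVert F V} (hℓ : finrank F ℓ.1 = 1) : finrank F (σ ℓ).1 = 1 := by
  have hsup : finrank F ↥(L.1 ⊔ ℓ.1) ≤ 2 := by
    have := finrank_add_le_finrank_add_finrank L.1 ℓ.1
    omega
  obtain ⟨H, hH, hLℓH⟩ :=
    (eq_top_or_exists_le_coatom (L.1 ⊔ ℓ.1)).resolve_left fun htop => by
      rw [htop, finrank_top] at hsup
      omega
  have hHn := finrank_add_one_of_isCoatom hH
  let H' := InVert.ofFinrank H (by omega) (by omega)
  have hadj : ∀ {X : InVert F V}, finrank F X.1 = 1 → X.1 ≤ H → (inclGraph F V).Adj X H' :=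
    fun hX hXH => Or.inl <| show _ < H from lt_of_le_of_finrank_lt_finrank hXH (by omega)
  have hσH : finrank F (σ H').1 + 1 = finrank F V :=
    (finrank_eq_one_or_add_one_eq ((noDominatingEdgeInNeighborSet_of_finrank_add_one_eq
      hHn).map σ)).resolve_left fun h1 =>
        not_adj_of_finrank_eq (hσL.trans h1.symm)
          (σ.map_adj_iff.2 (hadj hL (le_sup_left.trans hLℓH)))
  refine (finrank_eq_one_or_add_one_eq
    ((noDominatingEdgeInNeighborSet_of_finrank_eq_one hℓ).map σ)).resolve_right fun h1 =>
      not_adj_of_finrank_eq (by omega) (σ.map_adj_iff.2 (hadj hℓ (le_sup_right.trans hLℓH)))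

theorem finrank_map_eq_one_iff (hn : 3 ≤ finrank F V) (σ : inclGraph F V ≃g inclGraph F V)
    {L : InVert F V} (hL : finrank F L.1 = 1) (hσL : finrank F (σ L).1 = 1) (ℓ : InVert F V) :
    finrank F (σ ℓ).1 = 1 ↔ finrank F ℓ.1 = 1 :=
  ⟨fun hσℓ => by
    have := finrank_map_eq_one hn σ.symm (L := σ L) hσL (by rwa [σ.symm_apply_apply]) hσℓ
    rwa [σ.symm_apply_apply] at this,
    finrank_map_eq_one hn σ hL hσL⟩

theorem le_iff_eq_or_adj_of_finrank_eq_one {ℓ X : InVert F V} (hℓ : finrank F ℓ.1 = 1) :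
    ℓ.1 ≤ X.1 ↔ ℓ = X ∨ (inclGraph F V).Adj ℓ X := by
  refine ⟨fun h => ?_, ?_⟩
  · exact h.eq_or_lt.imp Subtype.ext Or.inl
  · rintro (rfl | h)
    · exact le_rfl
    · exact (lt_of_adj_of_finrank_eq_one hℓ h).le

theorem le_iff_forall_finrank_eq_one {X Y : InVert F V} :
    X.1 ≤ Y.1 ↔
      ∀ ℓ : InVert F V, finrank F ℓ.1 = 1 → ℓ.1 ≤ X.1 → ℓ.1 ≤ Y.1 := by
  refine ⟨fun h ℓ _ hℓ => hℓ.trans h, fun h v hv => ?_⟩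
  rcases eq_or_ne v 0 with rfl | hv0
  · exact zero_mem _
  have hv1 : finrank F (F ∙ v) = 1 := finrank_span_singleton hv0
  have := finrank_mono ((span_singleton_le_iff_mem v _).2 hv)
  have := InVert.finrank_lt X
  exact (span_singleton_le_iff_mem v _).1 <| h (InVert.ofFinrank (F ∙ v) (by omega) (by omega))
    hv1 ((span_singleton_le_iff_mem v _).2 hv)

theorem map_le_map_iff (σ : inclGraph F V ≃g inclGraph F V)
    (hline : ∀ ℓ : InVert F V, finrank F (σ ℓ).1 = 1 ↔ finrank F ℓ.1 = 1)
    {X Y : InVert F V} :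
    (σ X).1 ≤ (σ Y).1 ↔ X.1 ≤ Y.1 := by
  rw [le_iff_forall_finrank_eq_one, le_iff_forall_finrank_eq_one, σ.surjective.forall]
  refine forall_congr' fun ℓ => ?_
  rw [hline ℓ]
  refine imp_congr_right fun hℓ => ?_
  simp only [le_iff_eq_or_adj_of_finrank_eq_one hℓ,
    le_iff_eq_or_adj_of_finrank_eq_one ((hline ℓ).2 hℓ), σ.injective.eq_iff, σ.map_adj_iff]

end inclGraph

open inclGraph in
theorem inclGraph_aut_span_image_general
    (F V : Type*) [Field F] [AddCommGroup V] [Module F V] [FiniteDimensional F V]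
    (hn : 3 ≤ Module.finrank F V)
    (σ : inclGraph F V ≃g inclGraph F V)
    (h : ∃ L : InVert F V, Module.finrank F L.1 = 1 ∧ Module.finrank F (σ L).1 = 1)
    (k : ℕ) (W : InVert F V)
    (α β : Fin k → V)
    (hspan : Submodule.span F (Set.range α) = W.1)
    (Lα : Fin k → InVert F V) (hLα : ∀ i, (Lα i).1 = Submodule.span F {α i})
    (hσLα : ∀ i, (σ (Lα i)).1 = Submodule.span F {β i}) :
    (σ W).1 = Submodule.span F (Set.range β) := by
  obtain ⟨L, hL, hσL⟩ := h
  have hline := finrank_map_eq_one_iff hn σ hL hσL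
  have hW : ⨆ i, (Lα i).1 = W.1 := by simp only [hLα, ← span_range_eq_iSup, hspan]
  rw [span_range_eq_iSup, map_iSup σ (fun _ _ => map_le_map_iff σ hline) Lα W hW]
  simp only [hσLα]

/-- Let `σ` be a graph automorphism of `In(V)` mapping some 1-dimensional subspace to a
1-dimensional subspace, `W` a vertex with basis `α₁, …, α_k`, and suppose
`σ([αᵢ]) = [βᵢ]`. If `β₁, …, β_k` are linearly independent, then
`σ(W) = [β₁, …, β_k]`. -/
theorem inclGraph_aut_span_image
    (F V : Type*) [Field F] [Fintype F] [AddCommGroup V] [Module F V] [FiniteDimensional F V]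
    (hn : 3 ≤ Module.finrank F V)
    (σ : inclGraph F V ≃g inclGraph F V)
    (h : ∃ L : InVert F V, Module.finrank F L.1 = 1 ∧ Module.finrank F (σ L).1 = 1)
    (k : ℕ) (W : InVert F V) (hk : Module.finrank F W.1 = k)
    (α β : Fin k → V)
    (hα : LinearIndependent F α) (hspan : Submodule.span F (Set.range α) = W.1)
    (Lα : Fin k → InVert F V) (hLα : ∀ i, (Lα i).1 = Submodule.span F {α i})
    (hσLα : ∀ i, (σ (Lα i)).1 = Submodule.span F {β i})
    (hβ : LinearIndependent F β) :
    (σ W).1 = Submodule.span F (Set.range β) :=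
  inclGraph_aut_span_image_general F V hn σ h k W α β hspan Lα hLα hσLα
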